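/- For every natural number d, C(d,7) = −(2520/2520)·L_d(2) + (1603/1680)·L_d(3) − (735/1260)·L_d(4) + (175/1008)·L_d(5) − (21/840)·L_d(6) + (1/720)·L_d(7) as rational numbers (the denominators being 7·6·5·4·3 = 2520, 7·6·5·4·2! = 1680, 7·6·5·3! = 1260, 7·6·4! = 1008, 7·5! = 840, 6! = 720), where L_d(w) = (1/w)·Σ_{r ∣ w} μ(r)·d^{w/r} is the Witt number. -/

import Mathlib

/-! Both sides are polynomials in `d`: `C(d,7)` is the falling factorial `d (d-1) ⋯ (d-6) / 7!`,
and each `L_d(w)` with `w ≤ 7` is an explicit polynomial because `w` is a prime, a prime square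
or a product of two distinct primes, so only the Möbius values `μ(1) = 1`, `μ(p) = -1`,
`μ(p²) = 0` and `μ(pq) = 1` occur. The identity is then a polynomial identity. -/

/-- The Witt number `L_d(w) = (1/w) * Σ_{r ∣ w} μ(r) * d^(w/r)`, as a rational number. -/
def witt (d w : ℕ) : ℚ :=
  (1 / w : ℚ) * ∑ r ∈ w.divisors, (ArithmeticFunction.moebius r : ℚ) * (d : ℚ) ^ (w / r)

open ArithmeticFunction Finset

theorem Nat.Coprime.sum_divisors_mul_eq_sum_sum {M : Type*} [AddCommMonoid M] {m n : ℕ}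
    (hmn : m.Coprime n) (f : ℕ → M) :
    ∑ r ∈ (m * n).divisors, f r = ∑ a ∈ m.divisors, ∑ b ∈ n.divisors, f (a * b) := by
  rw [Nat.divisors_mul, Finset.mul_def, sum_image hmn.mul_injOn_divisors, sum_product]

theorem witt_prime_pow (d : ℕ) {p : ℕ} (hp : p.Prime) (k : ℕ) :
    witt d (p ^ (k + 1)) = ((d : ℚ) ^ p ^ (k + 1) - (d : ℚ) ^ p ^ k) / (p : ℚ) ^ (k + 1) := by
  have hμ : ∀ i, (moebius (p ^ (i + 2)) : ℚ) = 0 := fun i => by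
    simp [moebius_apply_prime_pow hp]
  have hdiv : p ^ (k + 1) / p = p ^ k := by rw [pow_succ, Nat.mul_div_cancel _ hp.pos]
  rw [witt, Nat.sum_divisors_prime_pow hp, sum_range_succ', sum_range_succ']
  simp only [zero_add, pow_one, hdiv]
  simp [hμ, moebius_apply_prime hp]
  ring

theorem witt_prime (d : ℕ) {p : ℕ} (hp : p.Prime) : witt d p = ((d : ℚ) ^ p - d) / p := by
  simpa using witt_prime_pow d hp 0

theorem witt_prime_mul_prime (d : ℕ) {p q : ℕ} (hp : p.Prime) (hq : q.Prime) (hpq : p ≠ q) :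
    witt d (p * q) =
      ((d : ℚ) ^ (p * q) - (d : ℚ) ^ q - (d : ℚ) ^ p + d) / (p * q : ℚ) := by
  have hcop : p.Coprime q := (Nat.coprime_primes hp hq).2 hpq
  rw [witt, hcop.sum_divisors_mul_eq_sum_sum, hp.divisors, hq.divisors]
  simp only [sum_pair hp.one_lt.ne, sum_pair hq.one_lt.ne]
  simp [isMultiplicative_moebius.map_mul_of_coprime hcop, moebius_apply_prime hp,
    moebius_apply_prime hq, hp.pos, hq.pos, hp.ne_zero, hq.ne_zero]
  ring

/-- C(d,7) = −(2520/2520)·L_d(2) + (1603/1680)·L_d(3) − (735/1260)·L_d(4) + (175/1008)·L_d(5)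
− (21/840)·L_d(6) + (1/720)·L_d(7). -/
theorem choose_seven_eq (d : ℕ) :
    (d.choose 7 : ℚ) =
      -(2520 / 2520) * witt d 2 + (1603 / 1680) * witt d 3 - (735 / 1260) * witt d 4
        + (175 / 1008) * witt d 5 - (21 / 840) * witt d 6 + (1 / 720) * witt d 7 := by
  rw [show 4 = 2 ^ (1 + 1) by rfl, witt_prime_pow d Nat.prime_two,
    show 6 = 2 * 3 by rfl, witt_prime_mul_prime d Nat.prime_two Nat.prime_three (by decide),
    witt_prime d Nat.prime_two, witt_prime d Nat.prime_three, witt_prime d Nat.prime_five,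
    witt_prime d (by norm_num : Nat.Prime 7), Nat.cast_choose_eq_descPochhammer_div]
  simp [descPochhammer_succ_right, Nat.factorial]
  ring
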